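/- arXiv:1211.3975 — 4 statements merged into one kernel-verified Lean document; each statement's English description precedes it below -/
import Mathlib

section
/- Let Γ be a finite graph, let A be a dimer covering of Γ, and let s₁, s₂, s₃ be pairwise independent even cycles in Γ such that s₁A, s₂A, s₃A, s₁s₂A, s₁s₃A, s₂s₃A (iterated symmetric differences) are all dimer coverings of Γ. Then s₁s₂s₃A is also a dimer covering of Γ. (The set of dimer coverings satisfies the 3-cube condition.) -/
/-! Finite-graph notions.  A finite graph `Γ = (E, V, ∂)` is given by finite types
`E` (edges) and `V` (vertices) and a boundary map `bd : E → Finset V` with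
`(bd e).card = 2` for every edge `e` (multiple edges allowed, loops excluded).
A vertex `v` is incident to an edge `e` if `v ∈ bd e`. -/

variable {E V : Type*}

/-- A set `s ⊆ E` is cyclic if every vertex is incident to exactly two or to zero
edges of `s`. -/
def IsCyclicSet (bd : E → Finset V) (s : Set E) : Prop :=
  ∀ v : V, {e ∈ s | v ∈ bd e}.ncard = 2 ∨ {e ∈ s | v ∈ bd e} = ∅

/-- A cycle is a minimal nonempty cyclic set. -/
def IsCycle (bd : E → Finset V) (s : Set E) : Prop :=
  IsCyclicSet bd s ∧ s.Nonempty ∧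
    ∀ t ⊆ s, IsCyclicSet bd t → t.Nonempty → t = s

/-- Two sets of edges are independent if no vertex is incident both to an edge of
the first set and to an edge of the second set. -/
def Indep (bd : E → Finset V) (s t : Set E) : Prop :=
  ∀ v : V, ¬ ((∃ e ∈ s, v ∈ bd e) ∧ (∃ e ∈ t, v ∈ bd e))

/-- A half-set: any two distinct edges in it have disjoint boundaries. -/
def IsHalfSet (bd : E → Finset V) (t : Set E) : Prop :=
  ∀ e ∈ t, ∀ f ∈ t, e ≠ f → ∀ v : V, ¬ (v ∈ bd e ∧ v ∈ bd f)

/-- `s', s''` form a partition of `s` into two halves. -/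
def AreHalves (bd : E → Finset V) (s s' s'' : Set E) : Prop :=
  s' ∪ s'' = s ∧ Disjoint s' s'' ∧ IsHalfSet bd s' ∧ IsHalfSet bd s''

/-- A cycle is even if it admits a partition into two halves. -/
def IsEvenCycle (bd : E → Finset V) (s : Set E) : Prop :=
  IsCycle bd s ∧ ∃ s' s'' : Set E, AreHalves bd s s' s''

/-- A dimer covering: a set of edges such that every vertex is incident to exactly
one edge of it. -/
def IsDimer (bd : E → Finset V) (A : Set E) : Prop :=
  ∀ v : V, ∃! e : E, e ∈ A ∧ v ∈ bd e

/-! Being a dimer covering is a condition on each vertex `v` separately, involving only the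
edges at `v`. If `s₁` has an edge at `v`, then by independence `s₂` and `s₃` have none, so
`s₁s₂s₃A` agrees with the dimer covering `s₁A` at `v`; otherwise `s₁s₂s₃A` agrees with the
dimer covering `s₂s₃A` at `v`. -/

theorem existsUnique_incident_congr {bd : E → Finset V} {B C : Set E} {v : V}
    (hBC : ∀ e, v ∈ bd e → (e ∈ B ↔ e ∈ C)) (hB : ∃! e, e ∈ B ∧ v ∈ bd e) :
    ∃! e, e ∈ C ∧ v ∈ bd e :=
  (existsUnique_congr fun e => and_congr_left (hBC e)).1 hB

theorem mem_symmDiff_iff_of_notMem {s B : Set E} {e : E} (he : e ∉ s) :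
    e ∈ symmDiff s B ↔ e ∈ B := by
  simp [Set.mem_symmDiff, he]

theorem mem_symmDiff_congr_right {s B C : Set E} {e : E} (h : e ∈ B ↔ e ∈ C) :
    e ∈ symmDiff s B ↔ e ∈ symmDiff s C := by
  simp only [Set.mem_symmDiff, h]

theorem Indep.notMem_right {bd : E → Finset V} {s t : Set E} (h : Indep bd s t) {v : V}
    (hv : ∃ e ∈ s, v ∈ bd e) {e : E} (he : v ∈ bd e) : e ∉ t :=
  fun het => h v ⟨hv, e, het, he⟩

theorem glide_three_cube_condition_general
    (bd : E → Finset V)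
    (A s₁ s₂ s₃ : Set E)
    (h₁₂ : Indep bd s₁ s₂) (h₁₃ : Indep bd s₁ s₃)
    (hA₁ : IsDimer bd (symmDiff s₁ A))
    (hA₂₃ : IsDimer bd (symmDiff s₂ (symmDiff s₃ A))) :
    IsDimer bd (symmDiff s₁ (symmDiff s₂ (symmDiff s₃ A))) := by
  intro v
  by_cases hv : ∃ e ∈ s₁, v ∈ bd e
  · refine existsUnique_incident_congr (fun e he => ?_) (hA₁ v)
    refine mem_symmDiff_congr_right ?_
    rw [mem_symmDiff_iff_of_notMem (h₁₂.notMem_right hv he),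
      mem_symmDiff_iff_of_notMem (h₁₃.notMem_right hv he)]
  · exact existsUnique_incident_congr
      (fun e he => (mem_symmDiff_iff_of_notMem fun he₁ => hv ⟨e, he₁, he⟩).symm) (hA₂₃ v)

/-- 3-cube condition: if `A` is a dimer covering of a finite graph,
`s₁, s₂, s₃` are pairwise independent even cycles such that the six glides
`s₁∆A, s₂∆A, s₃∆A, s₁∆s₂∆A, s₁∆s₃∆A, s₂∆s₃∆A` are dimer coverings, then so is
`s₁∆s₂∆s₃∆A`. -/
theorem glide_three_cube_condition [Fintype E] [Fintype V]
    (bd : E → Finset V) (hbd : ∀ e, (bd e).card = 2)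
    (A s₁ s₂ s₃ : Set E) (hA : IsDimer bd A)
    (h₁ : IsEvenCycle bd s₁) (h₂ : IsEvenCycle bd s₂) (h₃ : IsEvenCycle bd s₃)
    (h₁₂ : Indep bd s₁ s₂) (h₁₃ : Indep bd s₁ s₃) (h₂₃ : Indep bd s₂ s₃)
    (hA₁ : IsDimer bd (symmDiff s₁ A))
    (hA₂ : IsDimer bd (symmDiff s₂ A))
    (hA₃ : IsDimer bd (symmDiff s₃ A))
    (hA₁₂ : IsDimer bd (symmDiff s₁ (symmDiff s₂ A)))
    (hA₁₃ : IsDimer bd (symmDiff s₁ (symmDiff s₃ A)))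
    (hA₂₃ : IsDimer bd (symmDiff s₂ (symmDiff s₃ A))) :
    IsDimer bd (symmDiff s₁ (symmDiff s₂ (symmDiff s₃ A))) :=
  glide_three_cube_condition_general bd A s₁ s₂ s₃ h₁₂ h₁₃ hA₁ hA₂₃
end

section
/- Let Γ be a finite graph and let A, B, C be dimer coverings of Γ. Then the triple (A, B, C) is flat if and only if there exist a dimer covering K of Γ and a finite set S of pairwise independent even cycles of Γ with a partition S = X ⊔ Y ⊔ Z such that (△_{s∈T} s)△K is a dimer covering for every T ⊆ S, and A = (△_{s∈X} s)△K, B = (△_{s∈Y} s)△K, C = (△_{s∈Z} s)△K. -/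
/-!
Let `K` be the edgewise majority of `A`, `B`, `C`. For dimer coverings, flatness says that at
every vertex at least two of `A`, `B`, `C` agree with `K`; hence `K` is a dimer covering and the
supports of `A ∆ K`, `B ∆ K`, `C ∆ K` are pairwise independent. The symmetric difference of two
dimer coverings is a cyclic set whose connected components are even cycles, halved by the two
coverings. Gliding `K` along an independent family of such components turns `K`, near each
component, into the covering the component came from, so the result is again a dimer covering.
Conversely, at each vertex of a cube of glides only cycles from one of `X`, `Y`, `Z` occur, so
the other two coverings agree with `K` there.
-/

/-! Finite-graph notions.  A finite graph `Γ = (E, V, ∂)` is given by finite types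
`E` (edges) and `V` (vertices) and a boundary map `bd : E → Finset V` with
`(bd e).card = 2` for every edge `e` (multiple edges allowed, loops excluded).
A vertex `v` is incident to an edge `e` if `v ∈ bd e`. -/

variable {E V : Type*}

/-- A triple `(A, B, C)` of dimer coverings is flat if for every vertex `v` at least
two of the edges `A_v, B_v, C_v` coincide (stated via incidence, since the edge of a
dimer covering at a vertex is unique). -/
def IsFlat (bd : E → Finset V) (A B C : Set E) : Prop :=
  ∀ v : V, ∀ a ∈ A, ∀ b ∈ B, ∀ c ∈ C,
    v ∈ bd a → v ∈ bd b → v ∈ bd c → (a = b ∨ a = c ∨ b = c)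

open Relation

section Incidence

variable {bd : E → Finset V}

def edgesAt (bd : E → Finset V) (s : Set E) (v : V) : Set E := {e ∈ s | v ∈ bd e}

lemma edgesAt_symmDiff (s t : Set E) (v : V) :
    edgesAt bd (symmDiff s t) v = symmDiff (edgesAt bd s v) (edgesAt bd t v) :=
  Set.inter_symmDiff_distrib_right s t _

lemma edgesAt_symmDiff_eq_empty_iff {s t : Set E} {v : V} :
    edgesAt bd (symmDiff s t) v = ∅ ↔ edgesAt bd s v = edgesAt bd t v := by
  rw [edgesAt_symmDiff]
  exact symmDiff_eq_bot

lemma edgesAt_mono {s t : Set E} (h : s ⊆ t) (v : V) : edgesAt bd s v ⊆ edgesAt bd t v :=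
  fun _ he => ⟨h he.1, he.2⟩

lemma indep_iff_edgesAt {s t : Set E} :
    Indep bd s t ↔ ∀ v, edgesAt bd s v = ∅ ∨ edgesAt bd t v = ∅ := by
  simp only [Indep, Set.eq_empty_iff_forall_notMem, edgesAt, Set.mem_ofPred_eq]
  grind

instance : Std.Symm (Indep bd) := ⟨fun _ _ h v ⟨hs, ht⟩ => h v ⟨ht, hs⟩⟩

lemma Indep.mono {s t s' t' : Set E} (h : Indep bd s t) (hs : s' ⊆ s) (ht : t' ⊆ t) :
    Indep bd s' t' :=
  fun v ⟨⟨e, he, hev⟩, ⟨f, hf, hfv⟩⟩ => h v ⟨⟨e, hs he, hev⟩, ⟨f, ht hf, hfv⟩⟩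

lemma indep_symmDiff_iff {A B K : Set E} :
    Indep bd (symmDiff A K) (symmDiff B K) ↔
      ∀ v, edgesAt bd A v = edgesAt bd K v ∨ edgesAt bd B v = edgesAt bd K v := by
  simp only [indep_iff_edgesAt, edgesAt_symmDiff_eq_empty_iff]

lemma edgesAt_sUnion_of_indep {T : Set (Set E)} (hT : T.Pairwise (Indep bd)) {s : Set E}
    (hs : s ∈ T) {v : V} (hv : (edgesAt bd s v).Nonempty) :
    edgesAt bd (⋃₀ T) v = edgesAt bd s v := by
  refine Set.Subset.antisymm ?_ (edgesAt_mono (Set.subset_sUnion_of_mem hs) v)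
  rintro e ⟨⟨t, ht, het⟩, hev⟩
  obtain rfl : t = s := by
    by_contra hts
    obtain ⟨f, hf, hfv⟩ := hv
    exact hT ht hs hts v ⟨⟨e, het, hev⟩, ⟨f, hf, hfv⟩⟩
  exact ⟨het, hev⟩

lemma edgesAt_symmDiff_sUnion_of_forall {T : Set (Set E)} {v : V}
    (hT : ∀ s ∈ T, edgesAt bd s v = ∅) (K : Set E) :
    edgesAt bd (symmDiff (⋃₀ T) K) v = edgesAt bd K v := by
  have : edgesAt bd (⋃₀ T) v = ∅ := by
    rw [Set.eq_empty_iff_forall_notMem]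
    rintro e ⟨⟨s, hs, hes⟩, hev⟩
    exact (hT s hs).subset ⟨hes, hev⟩
  rw [edgesAt_symmDiff, this]
  exact bot_symmDiff _

end Incidence

section Dimer

variable {bd : E → Finset V}

lemma isDimer_iff {A : Set E} : IsDimer bd A ↔ ∀ v, ∃ a, edgesAt bd A v = {a} :=
  forall_congr' fun v => exists_congr fun _ =>
    (Set.eq_singleton_iff_unique_mem (s := edgesAt bd A v)).symm

lemma isDimer_of_forall_edgesAt_eq {A : Set E}
    (h : ∀ v, ∃ B, IsDimer bd B ∧ edgesAt bd A v = edgesAt bd B v) : IsDimer bd A := by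
  refine isDimer_iff.2 fun v => ?_
  obtain ⟨B, hB, hAB⟩ := h v
  rw [hAB]
  exact isDimer_iff.1 hB v

lemma IsDimer.isHalfSet_of_subset {M t : Set E} (hM : IsDimer bd M) (ht : t ⊆ M) :
    IsHalfSet bd t := by
  rintro e he f hf hef v ⟨hev, hfv⟩
  obtain ⟨m, -, hm⟩ := hM v
  exact hef ((hm e ⟨ht he, hev⟩).trans (hm f ⟨ht hf, hfv⟩).symm)

lemma IsDimer.isCyclicSet_symmDiff {M K : Set E} (hM : IsDimer bd M) (hK : IsDimer bd K) :
    IsCyclicSet bd (symmDiff M K) := by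
  intro v
  obtain ⟨m, hm⟩ := isDimer_iff.1 hM v
  obtain ⟨k, hk⟩ := isDimer_iff.1 hK v
  change (edgesAt bd _ v).ncard = 2 ∨ edgesAt bd _ v = ∅
  rw [edgesAt_symmDiff, hm, hk]
  by_cases hmk : m = k
  · exact Or.inr (by rw [hmk, symmDiff_self]; rfl)
  · left
    have hpair : symmDiff {m} {k} = ({m, k} : Set E) := by
      ext e
      simp only [Set.mem_symmDiff, Set.mem_singleton_iff, Set.mem_insert_iff]
      grind
    rw [hpair]
    exact Set.ncard_pair hmk

lemma areHalves_inter {M K c : Set E} (hM : IsDimer bd M) (hK : IsDimer bd K)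
    (hc : c ⊆ symmDiff M K) : AreHalves bd c (c ∩ M) (c ∩ K) := by
  refine ⟨?_, ?_, hM.isHalfSet_of_subset Set.inter_subset_right,
    hK.isHalfSet_of_subset Set.inter_subset_right⟩
  · rw [← Set.inter_union_distrib_left]
    exact Set.inter_eq_left.2 (hc.trans symmDiff_le_sup)
  · rw [Set.disjoint_left]
    rintro e ⟨hec, heM⟩ ⟨-, heK⟩
    rcases Set.mem_symmDiff.1 (hc hec) with ⟨-, h⟩ | ⟨-, h⟩
    exacts [h heK, h heM]

end Dimer

section Component

variable {bd : E → Finset V} {D : Set E}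

def IsAdjIn (bd : E → Finset V) (D : Set E) (e f : E) : Prop :=
  e ∈ D ∧ f ∈ D ∧ ∃ v, v ∈ bd e ∧ v ∈ bd f

instance : Std.Symm (IsAdjIn bd D) :=
  ⟨fun _ _ ⟨he, hf, v, hev, hfv⟩ => ⟨hf, he, v, hfv, hev⟩⟩

def component (bd : E → Finset V) (D : Set E) (e : E) : Set E :=
  {f ∈ D | ReflTransGen (IsAdjIn bd D) e f}

def components (bd : E → Finset V) (D : Set E) : Set (Set E) := component bd D '' D

lemma mem_component_self {e : E} (he : e ∈ D) : e ∈ component bd D e :=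
  ⟨he, ReflTransGen.refl⟩

lemma component_subset (e : E) : component bd D e ⊆ D := fun _ hf => hf.1

lemma component_eq_of_mem {e f : E} (hf : f ∈ component bd D e) :
    component bd D f = component bd D e := by
  ext g
  exact and_congr_right fun _ =>
    ⟨hf.2.trans, (Std.Symm.symm _ _ hf.2 : ReflTransGen _ f e).trans⟩

lemma mem_component_of_adj {e f g : E} (hf : f ∈ component bd D e) (hg : g ∈ D) {v : V}
    (hfv : v ∈ bd f) (hgv : v ∈ bd g) : g ∈ component bd D e :=
  ⟨hg, hf.2.tail ⟨hf.1, hg, v, hfv, hgv⟩⟩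

lemma edgesAt_component (e : E) (v : V) :
    edgesAt bd (component bd D e) v = ∅ ∨ edgesAt bd (component bd D e) v = edgesAt bd D v := by
  rcases (edgesAt bd (component bd D e) v).eq_empty_or_nonempty with h | ⟨f, hf, hfv⟩
  · exact Or.inl h
  · exact Or.inr <| (edgesAt_mono (component_subset e) v).antisymm
      fun g ⟨hg, hgv⟩ => ⟨mem_component_of_adj hf hg hfv hgv, hgv⟩

lemma indep_component {e f : E} (hne : component bd D e ≠ component bd D f) :
    Indep bd (component bd D e) (component bd D f) := by
  rintro v ⟨⟨e', he', hve'⟩, ⟨f', hf', hvf'⟩⟩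
  have : f' ∈ component bd D e := mem_component_of_adj he' (component_subset f hf') hve' hvf'
  exact hne ((component_eq_of_mem this).symm.trans (component_eq_of_mem hf'))

lemma pairwise_indep_components : (components bd D).Pairwise (Indep bd) := by
  rintro _ ⟨e, -, rfl⟩ _ ⟨f, -, rfl⟩ hne
  exact indep_component hne

lemma Indep.of_mem_components {D' s t : Set E} (h : Indep bd D D') (hs : s ∈ components bd D)
    (ht : t ∈ components bd D') : Indep bd s t := by
  obtain ⟨e, -, rfl⟩ := hs
  obtain ⟨f, -, rfl⟩ := ht
  exact h.mono (component_subset e) (component_subset f)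

lemma sUnion_components : ⋃₀ components bd D = D :=
  (Set.sUnion_subset <| Set.forall_mem_image.2 fun e _ => component_subset e).antisymm
    fun e he => Set.mem_sUnion_of_mem (mem_component_self he) ⟨e, he, rfl⟩

lemma Disjoint.components {D' : Set E} (h : Disjoint D D') :
    Disjoint (components bd D) (components bd D') := by
  rw [Set.disjoint_left]
  rintro _ ⟨e, he, rfl⟩ ⟨f, -, hfe⟩
  have : e ∈ component bd D' f := hfe ▸ mem_component_self he
  exact Set.disjoint_left.1 h he (component_subset f this)

end Component

section Cycle

variable {bd : E → Finset V}

lemma IsCyclicSet.edgesAt_eq_of_subset {D t : Set E} (hD : IsCyclicSet bd D)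
    (ht : IsCyclicSet bd t) (htD : t ⊆ D) {v : V} (hv : (edgesAt bd t v).Nonempty) :
    edgesAt bd t v = edgesAt bd D v := by
  have hsub := edgesAt_mono (bd := bd) htD v
  have ht2 : (edgesAt bd t v).ncard = 2 := (ht v).resolve_right hv.ne_empty
  have hD2 : (edgesAt bd D v).ncard = 2 := (hD v).resolve_right (hv.mono hsub).ne_empty
  exact Set.eq_of_subset_of_ncard_le hsub (by rw [ht2, hD2])
    (Set.finite_of_ncard_pos (by rw [hD2]; norm_num))

lemma isCycle_component {D : Set E} (hD : IsCyclicSet bd D) {e : E} (he : e ∈ D) :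
    IsCycle bd (component bd D e) := by
  have hcyc : IsCyclicSet bd (component bd D e) := fun v =>
    (edgesAt_component e v).elim Or.inr fun h => by
      change (edgesAt bd _ v).ncard = 2 ∨ edgesAt bd _ v = ∅
      rw [h]
      exact hD v
  refine ⟨hcyc, ⟨e, mem_component_self he⟩, fun t htc ht ⟨f₀, hf₀⟩ => htc.antisymm ?_⟩
  intro g hg
  have hpath : ReflTransGen (IsAdjIn bd D) f₀ g := by
    rw [← component_eq_of_mem (htc hf₀)] at hg
    exact hg.2
  clear hg
  induction hpath with
  | refl => exact hf₀
  | tail _ hadj ih =>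
    obtain ⟨-, hg'D, v, hfv, hgv⟩ := hadj
    -- `t` touches `v`, so it contains every edge of the cyclic set `D` at `v`
    have := hD.edgesAt_eq_of_subset ht (htc.trans (component_subset e)) ⟨_, ih, hfv⟩
    exact (this.symm.subset ⟨hg'D, hgv⟩).1

variable {M K : Set E}

lemma isEvenCycle_of_mem_components (hM : IsDimer bd M) (hK : IsDimer bd K) {s : Set E}
    (hs : s ∈ components bd (symmDiff M K)) : IsEvenCycle bd s := by
  obtain ⟨e, he, rfl⟩ := hs
  exact ⟨isCycle_component (hM.isCyclicSet_symmDiff hK) he, _, _,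
    areHalves_inter hM hK (component_subset e)⟩

lemma isDimer_symmDiff_of_mem_components (hM : IsDimer bd M) (hK : IsDimer bd K) {s : Set E}
    (hs : s ∈ components bd (symmDiff M K)) : IsDimer bd (symmDiff s K) := by
  obtain ⟨e, -, rfl⟩ := hs
  refine isDimer_of_forall_edgesAt_eq fun v => ?_
  rcases edgesAt_component (bd := bd) (D := symmDiff M K) e v with h | h
  · exact ⟨K, hK, by rw [edgesAt_symmDiff, h]; exact bot_symmDiff _⟩
  · refine ⟨M, hM, ?_⟩
    rw [edgesAt_symmDiff, h, ← edgesAt_symmDiff, symmDiff_symmDiff_cancel_right]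

lemma isDimer_symmDiff_sUnion (hK : IsDimer bd K) {T : Set (Set E)}
    (hT : T.Pairwise (Indep bd)) (hTK : ∀ s ∈ T, IsDimer bd (symmDiff s K)) :
    IsDimer bd (symmDiff (⋃₀ T) K) := by
  refine isDimer_of_forall_edgesAt_eq fun v => ?_
  by_cases htouch : ∃ s ∈ T, (edgesAt bd s v).Nonempty
  · obtain ⟨s, hs, hv⟩ := htouch
    refine ⟨symmDiff s K, hTK s hs, ?_⟩
    rw [edgesAt_symmDiff, edgesAt_symmDiff, edgesAt_sUnion_of_indep hT hs hv]
  · push Not at htouch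
    exact ⟨K, hK, edgesAt_symmDiff_sUnion_of_forall htouch K⟩

end Cycle

section Majority

def majority {α : Type*} (A B C : Set α) : Set α := A ∩ B ∪ A ∩ C ∪ B ∩ C

lemma disjoint_symmDiff_majority {α : Type*} (A B C : Set α) :
    Disjoint (symmDiff A (majority A B C)) (symmDiff B (majority A B C)) ∧
      Disjoint (symmDiff A (majority A B C)) (symmDiff C (majority A B C)) ∧
      Disjoint (symmDiff B (majority A B C)) (symmDiff C (majority A B C)) := by
  simp only [Set.disjoint_left, Set.mem_symmDiff, majority, Set.mem_union, Set.mem_inter_iff]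
  tauto

lemma majority_self_left {α : Type*} (s t : Set α) : majority s s t = s := by
  ext; simp only [majority, Set.mem_union, Set.mem_inter_iff]; tauto

lemma majority_self_mid {α : Type*} (s t : Set α) : majority s t s = s := by
  ext; simp only [majority, Set.mem_union, Set.mem_inter_iff]; tauto

lemma majority_self_right {α : Type*} (s t : Set α) : majority t s s = s := by
  ext; simp only [majority, Set.mem_union, Set.mem_inter_iff]; tauto

variable {bd : E → Finset V} {A B C K : Set E}

lemma edgesAt_majority (v : V) :
    edgesAt bd (majority A B C) v =
      majority (edgesAt bd A v) (edgesAt bd B v) (edgesAt bd C v) := by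
  ext e
  simp only [edgesAt, majority, Set.mem_union, Set.mem_inter_iff, Set.mem_ofPred_eq]
  tauto

def IsLocalMajority (bd : E → Finset V) (K A B C : Set E) : Prop :=
  ∀ v, (edgesAt bd A v = edgesAt bd K v ∧ edgesAt bd B v = edgesAt bd K v) ∨
    (edgesAt bd A v = edgesAt bd K v ∧ edgesAt bd C v = edgesAt bd K v) ∨
    (edgesAt bd B v = edgesAt bd K v ∧ edgesAt bd C v = edgesAt bd K v)

lemma IsFlat.isLocalMajority (hA : IsDimer bd A) (hB : IsDimer bd B) (hC : IsDimer bd C)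
    (h : IsFlat bd A B C) : IsLocalMajority bd (majority A B C) A B C := by
  intro v
  obtain ⟨a, ha⟩ := isDimer_iff.1 hA v
  obtain ⟨b, hb⟩ := isDimer_iff.1 hB v
  obtain ⟨c, hc⟩ := isDimer_iff.1 hC v
  have mem : ∀ {M : Set E} {x : E}, edgesAt bd M v = {x} → x ∈ M ∧ v ∈ bd x :=
    fun {_ x} h => (h ▸ rfl : x ∈ edgesAt bd _ v)
  rw [edgesAt_majority, ha, hb, hc]
  rcases h v a (mem ha).1 b (mem hb).1 c (mem hc).1 (mem ha).2 (mem hb).2 (mem hc).2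
    with rfl | rfl | rfl
  · simp only [majority_self_left, and_self, true_or]
  · simp only [majority_self_mid, and_self, true_or, or_true]
  · simp only [majority_self_right, and_self, or_true]

lemma IsLocalMajority.isDimer (hA : IsDimer bd A) (hB : IsDimer bd B)
    (h : IsLocalMajority bd K A B C) : IsDimer bd K :=
  isDimer_of_forall_edgesAt_eq fun v => by
    rcases h v with ⟨hAv, -⟩ | ⟨hAv, -⟩ | ⟨hBv, -⟩
    exacts [⟨A, hA, hAv.symm⟩, ⟨A, hA, hAv.symm⟩, ⟨B, hB, hBv.symm⟩]

lemma IsLocalMajority.indep_symmDiff (h : IsLocalMajority bd K A B C) :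
    Indep bd (symmDiff A K) (symmDiff B K) ∧ Indep bd (symmDiff A K) (symmDiff C K) ∧
      Indep bd (symmDiff B K) (symmDiff C K) := by
  simp only [indep_symmDiff_iff]
  refine ⟨fun v => ?_, fun v => ?_, fun v => ?_⟩ <;> rcases h v with h | h | h <;> tauto

lemma IsLocalMajority.pairwise_indep_components (h : IsLocalMajority bd K A B C) :
    (components bd (symmDiff A K) ∪ components bd (symmDiff B K) ∪
      components bd (symmDiff C K)).Pairwise (Indep bd) := by
  obtain ⟨hAB, hAC, hBC⟩ := h.indep_symmDiff
  refine Set.pairwise_union_of_symm.2 ⟨Set.pairwise_union_of_symm.2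
    ⟨_root_.pairwise_indep_components, _root_.pairwise_indep_components,
      fun _ hs _ ht _ => hAB.of_mem_components hs ht⟩,
    _root_.pairwise_indep_components, fun _ hs _ ht _ => ?_⟩
  exact hs.elim (hAC.of_mem_components · ht) (hBC.of_mem_components · ht)

lemma IsLocalMajority.isFlat (hK : IsDimer bd K) (h : IsLocalMajority bd K A B C) :
    IsFlat bd A B C := by
  intro v a ha b hb c hc hav hbv hcv
  obtain ⟨k, hk⟩ := isDimer_iff.1 hK v
  have eq_k : ∀ {M : Set E} {x : E}, edgesAt bd M v = edgesAt bd K v → x ∈ M → v ∈ bd x →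
      x = k := fun {_ x} hM hx hxv => by
    have : x ∈ edgesAt bd K v := hM ▸ ⟨hx, hxv⟩
    rwa [hk] at this
  rcases h v with ⟨hA, hB⟩ | ⟨hA, hC⟩ | ⟨hB, hC⟩
  · exact Or.inl ((eq_k hA ha hav).trans (eq_k hB hb hbv).symm)
  · exact Or.inr (Or.inl ((eq_k hA ha hav).trans (eq_k hC hc hcv).symm))
  · exact Or.inr (Or.inr ((eq_k hB hb hbv).trans (eq_k hC hc hcv).symm))

lemma isLocalMajority_glides {X Y Z : Set (Set E)} (hS : (X ∪ Y ∪ Z).Pairwise (Indep bd))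
    (hXY : Disjoint X Y) (hXZ : Disjoint X Z) (hYZ : Disjoint Y Z) :
    IsLocalMajority bd K (symmDiff (⋃₀ X) K) (symmDiff (⋃₀ Y) K) (symmDiff (⋃₀ Z) K) := by
  intro v
  have hX : X ⊆ X ∪ Y ∪ Z := Set.subset_union_left.trans Set.subset_union_left
  have hY : Y ⊆ X ∪ Y ∪ Z := Set.subset_union_right.trans Set.subset_union_left
  have hZ : Z ⊆ X ∪ Y ∪ Z := Set.subset_union_right
  have untouched : ∀ {W W' : Set (Set E)}, W ⊆ X ∪ Y ∪ Z → W' ⊆ X ∪ Y ∪ Z → Disjoint W W' →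
      (∃ s ∈ W, (edgesAt bd s v).Nonempty) →
        edgesAt bd (symmDiff (⋃₀ W') K) v = edgesAt bd K v := by
    rintro W W' hW hW' hd ⟨s, hs, hv⟩
    refine edgesAt_symmDiff_sUnion_of_forall (fun t ht => ?_) K
    have hst : s ≠ t := fun h => Set.disjoint_left.1 hd hs (h ▸ ht)
    exact (indep_iff_edgesAt.1 (hS (hW hs) (hW' ht) hst) v).resolve_left hv.ne_empty
  by_cases htX : ∃ s ∈ X, (edgesAt bd s v).Nonempty
  · exact Or.inr (Or.inr ⟨untouched hX hY hXY htX, untouched hX hZ hXZ htX⟩)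
  push Not at htX
  by_cases htY : ∃ s ∈ Y, (edgesAt bd s v).Nonempty
  · exact Or.inr (Or.inl ⟨edgesAt_symmDiff_sUnion_of_forall htX K, untouched hY hZ hYZ htY⟩)
  push Not at htY
  exact Or.inl ⟨edgesAt_symmDiff_sUnion_of_forall htX K, edgesAt_symmDiff_sUnion_of_forall htY K⟩

end Majority

theorem flat_iff_vertices_of_cube_general [Fintype E]
    (bd : E → Finset V)
    (A B C : Set E) (hA : IsDimer bd A) (hB : IsDimer bd B) (hC : IsDimer bd C) :
    IsFlat bd A B C ↔
      ∃ K : Set E, IsDimer bd K ∧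
        ∃ S X Y Z : Set (Set E),
          S.Finite ∧ (∀ c ∈ S, IsEvenCycle bd c) ∧ S.Pairwise (Indep bd) ∧
          X ∪ Y ∪ Z = S ∧ Disjoint X Y ∧ Disjoint X Z ∧ Disjoint Y Z ∧
          (∀ T ⊆ S, IsDimer bd (symmDiff (⋃₀ T) K)) ∧
          A = symmDiff (⋃₀ X) K ∧ B = symmDiff (⋃₀ Y) K ∧ C = symmDiff (⋃₀ Z) K := by
  constructor
  · intro hflat
    have hmaj := hflat.isLocalMajority hA hB hC
    set K := majority A B C
    have hK : IsDimer bd K := hmaj.isDimer hA hB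
    have hS := hmaj.pairwise_indep_components
    obtain ⟨dAB, dAC, dBC⟩ := disjoint_symmDiff_majority A B C
    set X := components bd (symmDiff A K)
    set Y := components bd (symmDiff B K)
    set Z := components bd (symmDiff C K)
    have hcomp : ∀ {M s : Set E}, IsDimer bd M → s ∈ components bd (symmDiff M K) →
        IsEvenCycle bd s ∧ IsDimer bd (symmDiff s K) := fun hM hs =>
      ⟨isEvenCycle_of_mem_components hM hK hs, isDimer_symmDiff_of_mem_components hM hK hs⟩
    have hcyc : ∀ s ∈ X ∪ Y ∪ Z, IsEvenCycle bd s ∧ IsDimer bd (symmDiff s K) := by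
      rintro s ((hs | hs) | hs)
      exacts [hcomp hA hs, hcomp hB hs, hcomp hC hs]
    refine ⟨K, hK, X ∪ Y ∪ Z, X, Y, Z, Set.toFinite _, fun s hs => (hcyc s hs).1, hS, rfl,
      dAB.components, dAC.components, dBC.components,
      fun T hT => isDimer_symmDiff_sUnion hK (hS.mono hT) fun s hs => (hcyc s (hT hs)).2,
      ?_, ?_, ?_⟩ <;> rw [sUnion_components, symmDiff_symmDiff_cancel_right]
  · rintro ⟨K, hK, S, X, Y, Z, -, -, hS, rfl, hXY, hXZ, hYZ, -, rfl, rfl, rfl⟩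
    exact (isLocalMajority_glides hS hXY hXZ hYZ).isFlat hK

/-- a triple of dimer coverings `(A, B, C)` is flat iff there are a
dimer covering `K` and a finite set `S` of pairwise independent even cycles with a
partition `S = X ⊔ Y ⊔ Z` such that all glides `(∆_{s∈T} s)∆K = (⋃₀ T)∆K`, `T ⊆ S`,
are dimer coverings and `A = (⋃₀ X)∆K`, `B = (⋃₀ Y)∆K`, `C = (⋃₀ Z)∆K`. -/
theorem flat_iff_vertices_of_cube [Fintype E] [Fintype V]
    (bd : E → Finset V) (hbd : ∀ e, (bd e).card = 2)
    (A B C : Set E) (hA : IsDimer bd A) (hB : IsDimer bd B) (hC : IsDimer bd C) :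
    IsFlat bd A B C ↔
      ∃ K : Set E, IsDimer bd K ∧
        ∃ S X Y Z : Set (Set E),
          S.Finite ∧ (∀ c ∈ S, IsEvenCycle bd c) ∧ S.Pairwise (Indep bd) ∧
          X ∪ Y ∪ Z = S ∧ Disjoint X Y ∧ Disjoint X Z ∧ Disjoint Y Z ∧
          (∀ T ⊆ S, IsDimer bd (symmDiff (⋃₀ T) K)) ∧
          A = symmDiff (⋃₀ X) K ∧ B = symmDiff (⋃₀ Y) K ∧ C = symmDiff (⋃₀ Z) K :=
  flat_iff_vertices_of_cube_general bd A B C hA hB hC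
end

section
/- Let Γ be a finite graph and let A, B be any two dimer coverings of Γ. Then the associated dimer labelings δ_A and δ_B lie in the same path component of L(Γ); i.e., there is a continuous path in L(Γ) from δ_A to δ_B. -/
/-! Finite-graph notions.  A finite graph `Γ = (E, V, ∂)` is given by finite types
`E` (edges) and `V` (vertices) and a boundary map `bd : E → Finset V` with
`(bd e).card = 2` for every edge `e` (multiple edges allowed, loops excluded).
A vertex `v` is incident to an edge `e` if `v ∈ bd e`. -/

variable {E V : Type*}

/-- The dimer labeling associated with a dimer covering `A`: the characteristic
function of `A`. -/
noncomputable def dimerDelta (A : Set E) : E → ℝ :=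
  A.indicator fun _ => 1

/-- A dimer labeling: a labeling of the edges by numbers in `[0,1]` such that at
every vertex the labels of the incident edges sum to `1` and at most two of these
labels are nonzero. -/
def IsDimerLabeling (bd : E → Finset V) (l : E → ℝ) : Prop :=
  (∀ e, l e ∈ Set.Icc (0 : ℝ) 1) ∧
  (∀ v : V, ∑ᶠ e ∈ {e : E | v ∈ bd e}, l e = 1) ∧
  (∀ v : V, {e : E | v ∈ bd e ∧ l e ≠ 0}.ncard ≤ 2)

/-- The space `L(Γ)` of dimer labelings, topologized as a subspace of `[0,1]^E`. -/
abbrev DimerLab (bd : E → Finset V) : Type _ :=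
  {l : E → ℝ // IsDimerLabeling bd l}

/-- The dimer space `L₀(Γ)`: the path component of a basepoint (a dimer labeling
associated with a dimer covering) in `L(Γ)`. -/
abbrev DimerSpace (bd : E → Finset V) (x₀ : DimerLab bd) : Type _ :=
  {l : DimerLab bd // l ∈ pathComponent x₀}

/-- The canonical basepoint of the dimer space. -/
noncomputable def DimerSpace.base (bd : E → Finset V) (x₀ : DimerLab bd) :
    DimerSpace bd x₀ :=
  ⟨x₀, mem_pathComponent_self x₀⟩

/-- the dimer labelings associated with any two dimer coverings of a
finite graph lie in the same path component of `L(Γ)`: they are joined by a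
continuous path in `L(Γ)`. -/
theorem dimer_labelings_joined [Fintype E] [Fintype V]
    (bd : E → Finset V) (hbd : ∀ e, (bd e).card = 2)
    (A B : Set E) (hA : IsDimer bd A) (hB : IsDimer bd B)
    (hδA : IsDimerLabeling bd (dimerDelta A))
    (hδB : IsDimerLabeling bd (dimerDelta B)) :
    Joined (⟨dimerDelta A, hδA⟩ : DimerLab bd) ⟨dimerDelta B, hδB⟩ := by
  have hlab : ∀ t : unitInterval, IsDimerLabeling bd
      (fun g => (1 - (t : ℝ)) * dimerDelta A g + (t : ℝ) * dimerDelta B g) := by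
    intro t
    obtain ⟨t, ht0, ht1⟩ := t
    classical
    refine ⟨?_, ?_, ?_⟩
    · intro e
      have hA1 := hδA.1 e
      have hB1 := hδB.1 e
      simp only [Set.mem_Icc] at *
      constructor
      · have := mul_nonneg (by linarith : (0:ℝ) ≤ 1 - t) hA1.1
        have := mul_nonneg ht0 hB1.1
        linarith
      · have h1 : (1 - t) * dimerDelta A e ≤ (1 - t) * 1 :=
          mul_le_mul_of_nonneg_left hA1.2 (by linarith)
        have h2 : t * dimerDelta B e ≤ t * 1 :=
          mul_le_mul_of_nonneg_left hB1.2 ht0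
        nlinarith
    · intro v
      have hset : {e : E | v ∈ bd e} = ↑(Finset.univ.filter (fun e => v ∈ bd e)) := by
        ext e; simp
      have key : ∀ f : E → ℝ, ∑ᶠ e ∈ {e : E | v ∈ bd e}, f e
          = ∑ e ∈ Finset.univ.filter (fun e => v ∈ bd e), f e := by
        intro f; rw [hset, finsum_mem_coe_finset]
      rw [key]
      have hAs := hδA.2.1 v
      have hBs := hδB.2.1 v
      rw [key] at hAs hBs
      simp only [Finset.sum_add_distrib, ← Finset.mul_sum, hAs, hBs]
      ring
    · intro v
      obtain ⟨eA, ⟨heA, heAv⟩, huA⟩ := hA v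
      obtain ⟨eB, ⟨heB, heBv⟩, huB⟩ := hB v
      have hsub : {e : E | v ∈ bd e ∧
          (1 - t) * dimerDelta A e + t * dimerDelta B e ≠ 0} ⊆ {eA, eB} := by
        intro g ⟨hgv, hgne⟩
        by_contra hg
        simp only [Set.mem_insert_iff, Set.mem_singleton_iff] at hg
        push_neg at hg
        have hgA : g ∉ A := fun h => hg.1 (huA g ⟨h, hgv⟩)
        have hgB : g ∉ B := fun h => hg.2 (huB g ⟨h, hgv⟩)
        apply hgne
        simp [dimerDelta, Set.indicator_of_notMem, hgA, hgB]
      calc _ ≤ ({eA, eB} : Set E).ncard := Set.ncard_le_ncard hsub (Set.toFinite _)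
        _ ≤ 2 := by
            apply le_trans (Set.ncard_insert_le _ _)
            simp
  refine ⟨⟨⟨fun t => ⟨fun g => (1 - (t : ℝ)) * dimerDelta A g + (t : ℝ) * dimerDelta B g,
      hlab t⟩, ?_⟩, ?_, ?_⟩⟩
  · apply Continuous.subtype_mk
    apply continuous_pi
    intro g
    fun_prop
  · ext g; simp
  · ext g; simp
end

section
/- Let Γ be a finite graph and let S be a finite set of pairwise independent odd cycles in Γ. Let Γ_S be the subgraph of Γ obtained by deleting all edges belonging to cycles of S, all vertices of those edges, and all edges of Γ incident to those vertices. Define i : L(Γ_S) → L(Γ) by extending each dimer labeling of Γ_S by the value 1/2 on all edges belonging to cycles of S and 0 on all other edges of Γ not in Γ_S. Then i is a topological embedding whose image is a union of path components of L(Γ); moreover, if Γ_S admits a dimer covering, then i(L₀(Γ_S)) is a single path component of L(Γ). -/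
/-! Finite-graph notions.  A finite graph `Γ = (E, V, ∂)` is given by finite types
`E` (edges) and `V` (vertices) and a boundary map `bd : E → Finset V` with
`(bd e).card = 2` for every edge `e` (multiple edges allowed, loops excluded).
A vertex `v` is incident to an edge `e` if `v ∈ bd e`. -/

variable {E V : Type*}

/-- A cycle is odd if it is not even. -/
def IsOddCycle (bd : E → Finset V) (s : Set E) : Prop :=
  IsCycle bd s ∧ ¬ ∃ s' s'' : Set E, AreHalves bd s s' s''

/-- The vertices deleted when forming `Γ_S`: the vertices of the edges belonging to
the cycles of `S`. -/
def delVertices (bd : E → Finset V) (S : Set (Set E)) : Set V :=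
  {v | ∃ c ∈ S, ∃ e ∈ c, v ∈ bd e}

/-- The edges of the subgraph `Γ_S`: edges not belonging to a cycle of `S` and not
incident to a deleted vertex. -/
abbrev SubEdge (bd : E → Finset V) (S : Set (Set E)) : Type _ :=
  {e : E // e ∉ ⋃₀ S ∧ ∀ v ∈ bd e, v ∉ delVertices bd S}

/-- The vertices of the subgraph `Γ_S`. -/
abbrev SubVertex (bd : E → Finset V) (S : Set (Set E)) : Type _ :=
  {v : V // v ∉ delVertices bd S}

open Classical in
/-- The boundary map of the subgraph `Γ_S`. -/
noncomputable def subBd (bd : E → Finset V) (S : Set (Set E)) :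
    SubEdge bd S → Finset (SubVertex bd S) :=
  fun e => (bd e.1).subtype fun v => v ∉ delVertices bd S

open Classical in
/-- Extension of a labeling of `Γ_S` to `Γ`: value `1/2` on the edges of the cycles
of `S` and `0` on all other edges of `Γ` not in `Γ_S`. -/
noncomputable def extLab (bd : E → Finset V) (S : Set (Set E))
    (l : SubEdge bd S → ℝ) : E → ℝ := fun e =>
  if e ∈ ⋃₀ S then 1 / 2
  else if h : e ∉ ⋃₀ S ∧ ∀ v ∈ bd e, v ∉ delVertices bd S then l ⟨e, h⟩ else 0

/-! Every vertex of a cycle `c ∈ S` meets exactly two edges of `c` and, by independence, no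
other edge of `⋃₀ S`. If a dimer labeling of `Γ` is nonzero on `⋃₀ S`, these two edges are
therefore its whole support at such a vertex, so their labels sum to `1` and all other edges
there carry `0`. Along an odd cycle this forces every label to be `1/2`: the edges labelled
`1/2` form a cyclic subset, equal to the cycle by minimality unless it is empty, and if it is
empty the edges above and below `1/2` split the cycle into two halves. Hence the image of the
extension is `{m | m = 1/2 on ⋃₀ S}`, which is closed, and also `{m | m ≠ 0 on ⋃₀ S}`, which
is open; an embedding with clopen image maps path components onto path components. -/

open Set Topology

section PathComponents

variable {X Y : Type*} [TopologicalSpace X] [TopologicalSpace Y]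

theorem IsClopen.pathComponent_subset {s : Set X} {x : X} (hs : IsClopen s) (hx : x ∈ s) :
    pathComponent x ⊆ s :=
  (pathComponent_subset_component x).trans (hs.connectedComponent_subset hx)

theorem Topology.IsInducing.image_pathComponent {f : X → Y} (hf : IsInducing f) {x : X}
    (h : pathComponent (f x) ⊆ range f) : f '' pathComponent x = pathComponent (f x) := by
  refine subset_antisymm ?_ fun y hy => ?_
  · exact (isPathConnected_pathComponent.image hf.continuous).subset_pathComponent
      (mem_image_of_mem f (mem_pathComponent_self x))
  · obtain ⟨z, rfl⟩ := h hy
    have hjoin : JoinedIn (f '' univ) (f x) (f z) :=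
      (isPathConnected_pathComponent.joinedIn _ (mem_pathComponent_self _) _ hy).mono
        (image_univ ▸ h)
    rw [hf.joinedIn_image (mem_univ x) (mem_univ z), joinedIn_univ] at hjoin
    exact mem_image_of_mem f hjoin

end PathComponents

theorem finsum_mem_eq_add_of_ne_zero {α M : Type*} [AddCommMonoid M] {f : α → M} {s : Set α}
    {a b : α} (hab : a ≠ b) (ha : a ∈ s) (hb : b ∈ s) (h : ∀ e ∈ s, f e ≠ 0 → e = a ∨ e = b) :
    ∑ᶠ e ∈ s, f e = f a + f b := by
  refine (finsum_mem_inter_support_eq' f s {a, b} fun e he => ⟨fun hs => h e hs he, ?_⟩).trans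
    (finsum_mem_pair hab)
  rintro (rfl | rfl) <;> assumption

section DimerLabelings

variable {bd : E → Finset V}

section OddCycle

variable {c : Set E} {x : E → ℝ}

theorem IsCyclicSet.sep_eq_half (hc : IsCyclicSet bd c)
    (H : ∀ v e f, e ∈ c → f ∈ c → e ≠ f → v ∈ bd e → v ∈ bd f → x e + x f = 1) :
    IsCyclicSet bd {e ∈ c | x e = 1 / 2} := by
  intro v
  rcases hc v with h2 | h0
  · obtain ⟨a, b, hab, hset⟩ := ncard_eq_two.mp h2
    have hmem : ∀ e, e ∈ c ∧ v ∈ bd e ↔ e = a ∨ e = b := fun e => by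
      simpa using Set.ext_iff.mp hset e
    have ha := (hmem a).mpr (Or.inl rfl)
    have hb := (hmem b).mpr (Or.inr rfl)
    have hsum := H v a b ha.1 hb.1 hab ha.2 hb.2
    by_cases hxa : x a = 1 / 2
    · left
      convert ncard_pair hab using 2
      ext e
      refine ⟨fun he => (hmem e).mp ⟨he.1.1, he.2⟩, ?_⟩
      rintro (rfl | rfl)
      · exact ⟨⟨ha.1, hxa⟩, ha.2⟩
      · exact ⟨⟨hb.1, by linarith⟩, hb.2⟩
    · right
      refine eq_empty_of_forall_notMem ?_
      rintro e ⟨⟨hec, hxe⟩, hve⟩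
      rcases (hmem e).mp ⟨hec, hve⟩ with rfl | rfl
      · exact hxa hxe
      · exact hxa (by linarith)
  · right
    exact eq_empty_of_subset_empty fun e he => h0 ▸ ⟨he.1.1, he.2⟩

theorem areHalves_of_ne_half
    (H : ∀ v e f, e ∈ c → f ∈ c → e ≠ f → v ∈ bd e → v ∈ bd f → x e + x f = 1)
    (hne : ∀ e ∈ c, x e ≠ 1 / 2) :
    AreHalves bd c {e ∈ c | 1 / 2 < x e} {e ∈ c | x e < 1 / 2} := by
  refine ⟨?_, ?_, ?_, ?_⟩
  · ext e
    refine ⟨by rintro (⟨he, -⟩ | ⟨he, -⟩) <;> exact he, fun he => ?_⟩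
    rcases (hne e he).lt_or_gt with hlt | hgt
    exacts [Or.inr ⟨he, hlt⟩, Or.inl ⟨he, hgt⟩]
  · exact disjoint_left.mpr fun e he he' => by linarith [he.2, he'.2]
  · rintro e ⟨he, hxe⟩ f ⟨hf, hxf⟩ hef v ⟨hve, hvf⟩
    linarith [H v e f he hf hef hve hvf]
  · rintro e ⟨he, hxe⟩ f ⟨hf, hxf⟩ hef v ⟨hve, hvf⟩
    linarith [H v e f he hf hef hve hvf]

theorem IsOddCycle.eq_half_of_add_eq_one (hc : IsOddCycle bd c)
    (H : ∀ v e f, e ∈ c → f ∈ c → e ≠ f → v ∈ bd e → v ∈ bd f → x e + x f = 1) :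
    ∀ e ∈ c, x e = 1 / 2 := by
  by_cases hhalf : ∃ e ∈ c, x e = 1 / 2
  · have hall := hc.1.2.2 _ (sep_subset _ _) (hc.1.1.sep_eq_half H) hhalf
    intro e he
    rw [← hall] at he
    exact he.2
  · push Not at hhalf
    exact (hc.2 ⟨_, _, areHalves_of_ne_half H hhalf⟩).elim

end OddCycle

section Subgraph

variable {S : Set (Set E)} {v : V} {l : SubEdge bd S → ℝ} {m : E → ℝ}

theorem extLab_of_mem_sUnion {e : E} (he : e ∈ ⋃₀ S) : extLab bd S l e = 1 / 2 :=
  if_pos he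

@[simp]
theorem extLab_val (e : SubEdge bd S) : extLab bd S l e = l e := by
  simp only [extLab, if_neg e.2.1, dif_pos e.2]

theorem extLab_eq_zero {e : E} {u : V} (he : e ∉ ⋃₀ S) (hu : u ∈ bd e)
    (hdel : u ∈ delVertices bd S) : extLab bd S l e = 0 := by
  simp only [extLab, if_neg he]
  exact dif_neg fun h => h.2 u hu hdel

theorem mem_subBd {e : SubEdge bd S} {w : SubVertex bd S} :
    w ∈ subBd bd S e ↔ (w : V) ∈ bd e := by
  simp [subBd]

theorem ncard_sep_sUnion_eq_two (hS : ∀ s ∈ S, IsCyclicSet bd s) (hindep : S.Pairwise (Indep bd))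
    (hv : v ∈ delVertices bd S) : {e ∈ ⋃₀ S | v ∈ bd e}.ncard = 2 := by
  obtain ⟨c, hc, e₀, he₀, hve₀⟩ := hv
  have hsep : {e ∈ ⋃₀ S | v ∈ bd e} = {e ∈ c | v ∈ bd e} := by
    ext e
    refine ⟨fun ⟨⟨c', hc', hec'⟩, hve⟩ => ⟨?_, hve⟩, fun ⟨hec, hve⟩ => ⟨⟨c, hc, hec⟩, hve⟩⟩
    obtain rfl : c' = c :=
      by_contra fun hne => hindep hc' hc hne v ⟨⟨e, hec', hve⟩, ⟨e₀, he₀, hve₀⟩⟩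
    exact hec'
  rw [hsep]
  exact (hS c hc v).resolve_right (nonempty_iff_ne_empty.mp ⟨e₀, he₀, hve₀⟩)

section Undeleted

variable (hv : v ∉ delVertices bd S)
  (hzero : ∀ e ∉ ⋃₀ S, ∀ u ∈ bd e, u ∈ delVertices bd S → m e = 0)
include hv hzero

theorem setOf_incident_ne_zero_eq_image :
    {e | v ∈ bd e ∧ m e ≠ 0} =
      Subtype.val '' {e : SubEdge bd S | ⟨v, hv⟩ ∈ subBd bd S e ∧ m e ≠ 0} := by
  ext e
  refine ⟨fun ⟨hve, hme⟩ => ?_, ?_⟩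
  · have heS : e ∉ ⋃₀ S := fun ⟨c, hc, hec⟩ => hv ⟨c, hc, e, hec, hve⟩
    have hsub : ∀ u ∈ bd e, u ∉ delVertices bd S := fun u hu hdel =>
      hme (hzero e heS u hu hdel)
    exact ⟨⟨e, heS, hsub⟩, ⟨mem_subBd.mpr hve, hme⟩, rfl⟩
  · rintro ⟨e, ⟨hve, hme⟩, rfl⟩
    exact ⟨mem_subBd.mp hve, hme⟩

theorem finsum_incident_eq_finsum_subIncident :
    ∑ᶠ e ∈ {e | v ∈ bd e}, m e = ∑ᶠ e ∈ {e : SubEdge bd S | ⟨v, hv⟩ ∈ subBd bd S e}, m e := by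
  rw [← finsum_mem_inter_support, ← finsum_mem_inter_support (fun e : SubEdge bd S => m e)]
  change ∑ᶠ e ∈ {e | v ∈ bd e ∧ m e ≠ 0}, m e = _
  rw [setOf_incident_ne_zero_eq_image hv hzero]
  exact finsum_mem_image Subtype.val_injective.injOn

theorem ncard_incident_ne_zero_eq :
    {e | v ∈ bd e ∧ m e ≠ 0}.ncard =
      {e : SubEdge bd S | ⟨v, hv⟩ ∈ subBd bd S e ∧ m e ≠ 0}.ncard := by
  rw [setOf_incident_ne_zero_eq_image hv hzero, ncard_image_of_injective _ Subtype.val_injective]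

end Undeleted

theorem setOf_incident_extLab_ne_zero_subset (hv : v ∈ delVertices bd S) :
    {e | v ∈ bd e ∧ extLab bd S l e ≠ 0} ⊆ {e ∈ ⋃₀ S | v ∈ bd e} :=
  fun _ ⟨hve, hne⟩ => ⟨by_contra fun heS => hne (extLab_eq_zero heS hve hv), hve⟩

theorem finsum_incident_extLab_of_mem_delVertices (hS : ∀ s ∈ S, IsCyclicSet bd s)
    (hindep : S.Pairwise (Indep bd)) (hv : v ∈ delVertices bd S) :
    ∑ᶠ e ∈ {e | v ∈ bd e}, extLab bd S l e = 1 := by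
  obtain ⟨a, b, hab, hpair⟩ := ncard_eq_two.mp (ncard_sep_sUnion_eq_two hS hindep hv)
  have ha : a ∈ {e ∈ ⋃₀ S | v ∈ bd e} := hpair ▸ mem_insert a {b}
  have hb : b ∈ {e ∈ ⋃₀ S | v ∈ bd e} := hpair ▸ mem_insert_of_mem a rfl
  rw [finsum_mem_eq_add_of_ne_zero hab ha.2 hb.2 fun e hve hne => ?_,
    extLab_of_mem_sUnion ha.1, extLab_of_mem_sUnion hb.1]
  · norm_num
  · have he := setOf_incident_extLab_ne_zero_subset hv ⟨hve, hne⟩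
    rwa [hpair] at he

theorem isDimerLabeling_extLab [Fintype E] (hS : ∀ s ∈ S, IsCyclicSet bd s)
    (hindep : S.Pairwise (Indep bd)) (hl : IsDimerLabeling (subBd bd S) l) :
    IsDimerLabeling bd (extLab bd S l) := by
  have hzero : ∀ e ∉ ⋃₀ S, ∀ u ∈ bd e, u ∈ delVertices bd S → extLab bd S l e = 0 :=
    fun e he u hu hdel => extLab_eq_zero he hu hdel
  refine ⟨fun e => ?_, fun v => ?_, fun v => ?_⟩
  · unfold extLab
    split_ifs
    exacts [⟨by norm_num, by norm_num⟩, hl.1 _, ⟨le_rfl, zero_le_one⟩]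
  · by_cases hv : v ∈ delVertices bd S
    · exact finsum_incident_extLab_of_mem_delVertices hS hindep hv
    · simpa only [finsum_incident_eq_finsum_subIncident hv hzero, extLab_val] using hl.2.1 _
  · by_cases hv : v ∈ delVertices bd S
    · exact (ncard_le_ncard (setOf_incident_extLab_ne_zero_subset hv)).trans
        (ncard_sep_sUnion_eq_two hS hindep hv).le
    · simpa only [ncard_incident_ne_zero_eq hv hzero, extLab_val] using hl.2.2 _

theorem IsDimerLabeling.setOf_incident_ne_zero_eq [Fintype E] (hm : IsDimerLabeling bd m)
    (hS : ∀ s ∈ S, IsCyclicSet bd s) (hindep : S.Pairwise (Indep bd))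
    (hnz : ∀ e ∈ ⋃₀ S, m e ≠ 0) (hv : v ∈ delVertices bd S) :
    {e | v ∈ bd e ∧ m e ≠ 0} = {e ∈ ⋃₀ S | v ∈ bd e} :=
  (eq_of_subset_of_ncard_le (t := {e | v ∈ bd e ∧ m e ≠ 0}) (fun e he => ⟨he.2, hnz e he.1⟩)
    (by rw [ncard_sep_sUnion_eq_two hS hindep hv]; exact hm.2.2 v)).symm

theorem IsDimerLabeling.eq_zero_of_mem_delVertices [Fintype E] (hm : IsDimerLabeling bd m)
    (hS : ∀ s ∈ S, IsCyclicSet bd s) (hindep : S.Pairwise (Indep bd))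
    (hnz : ∀ e ∈ ⋃₀ S, m e ≠ 0) :
    ∀ e ∉ ⋃₀ S, ∀ u ∈ bd e, u ∈ delVertices bd S → m e = 0 := by
  intro e he u hu hdel
  by_contra hme
  have he' : e ∈ {e | u ∈ bd e ∧ m e ≠ 0} := ⟨hu, hme⟩
  rw [hm.setOf_incident_ne_zero_eq hS hindep hnz hdel] at he'
  exact he he'.1

theorem IsDimerLabeling.eq_half_of_ne_zero [Fintype E] (hm : IsDimerLabeling bd m)
    (hodd : ∀ s ∈ S, IsOddCycle bd s) (hindep : S.Pairwise (Indep bd))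
    (hnz : ∀ e ∈ ⋃₀ S, m e ≠ 0) : ∀ e ∈ ⋃₀ S, m e = 1 / 2 := by
  have hS : ∀ s ∈ S, IsCyclicSet bd s := fun s hs => (hodd s hs).1.1
  rintro e ⟨c, hc, hec⟩
  refine (hodd c hc).eq_half_of_add_eq_one (fun v f g hf hg hfg hvf hvg => ?_) e hec
  have hv : v ∈ delVertices bd S := ⟨c, hc, f, hf, hvf⟩
  have hpair : {f, g} = {e ∈ ⋃₀ S | v ∈ bd e} := by
    refine eq_of_subset_of_ncard_le ?_
      (by rw [ncard_sep_sUnion_eq_two hS hindep hv, ncard_pair hfg])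
    rintro _ (rfl | rfl)
    exacts [⟨⟨c, hc, hf⟩, hvf⟩, ⟨⟨c, hc, hg⟩, hvg⟩]
  refine (finsum_mem_eq_add_of_ne_zero hfg hvf hvg fun e hve hme => ?_).symm.trans (hm.2.1 v)
  have he : e ∈ {e | v ∈ bd e ∧ m e ≠ 0} := ⟨hve, hme⟩
  rwa [hm.setOf_incident_ne_zero_eq hS hindep hnz hv, ← hpair] at he

theorem IsDimerLabeling.restrict (hm : IsDimerLabeling bd m)
    (hzero : ∀ e ∉ ⋃₀ S, ∀ u ∈ bd e, u ∈ delVertices bd S → m e = 0) :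
    IsDimerLabeling (subBd bd S) fun e => m e := by
  refine ⟨fun e => hm.1 e, fun ⟨v, hv⟩ => ?_, fun ⟨v, hv⟩ => ?_⟩
  · rw [← finsum_incident_eq_finsum_subIncident hv hzero]
    exact hm.2.1 v
  · rw [← ncard_incident_ne_zero_eq hv hzero]
    exact hm.2.2 v

theorem extLab_restrict (hhalf : ∀ e ∈ ⋃₀ S, m e = 1 / 2)
    (hzero : ∀ e ∉ ⋃₀ S, ∀ u ∈ bd e, u ∈ delVertices bd S → m e = 0) :
    extLab bd S (fun e => m e) = m := by
  funext e
  by_cases heS : e ∈ ⋃₀ S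
  · rw [extLab_of_mem_sUnion heS, hhalf e heS]
  by_cases hsub : ∀ u ∈ bd e, u ∉ delVertices bd S
  · exact extLab_val (⟨e, heS, hsub⟩ : SubEdge bd S)
  push Not at hsub
  obtain ⟨u, hu, hdel⟩ := hsub
  rw [extLab_eq_zero heS hu hdel, hzero e heS u hu hdel]

end Subgraph

section Embedding

variable [Fintype E] {S : Set (Set E)} (hS : ∀ s ∈ S, IsCyclicSet bd s)
  (hindep : S.Pairwise (Indep bd))

noncomputable def extDimerLab : DimerLab (subBd bd S) → DimerLab bd :=
  fun l => ⟨extLab bd S l.1, isDimerLabeling_extLab hS hindep l.2⟩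

theorem isEmbedding_extDimerLab : IsEmbedding (extDimerLab hS hindep) := by
  have hcont : Continuous (extDimerLab hS hindep) := by
    refine (continuous_pi fun e => ?_).subtype_mk _
    simp only [extLab]
    split_ifs
    exacts [continuous_const, (continuous_apply _).comp continuous_subtype_val, continuous_const]
  have hres : Continuous fun m : DimerLab bd => fun e : SubEdge bd S => m.1 e :=
    continuous_pi fun e => (continuous_apply e.1).comp continuous_subtype_val
  refine .of_comp hcont hres ?_
  convert IsEmbedding.subtypeVal
  funext l e
  exact extLab_val e

theorem range_extDimerLab :
    range (extDimerLab hS hindep) = {m : DimerLab bd | ∀ e ∈ ⋃₀ S, m.1 e = 1 / 2} := by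
  refine subset_antisymm ?_ fun m hhalf => ?_
  · rintro _ ⟨l, rfl⟩ e he
    exact extLab_of_mem_sUnion he
  have hzero := m.2.eq_zero_of_mem_delVertices hS hindep fun e he => by
    rw [hhalf e he]; norm_num
  exact ⟨⟨_, m.2.restrict hzero⟩, Subtype.ext (extLab_restrict hhalf hzero)⟩

end Embedding

theorem isClopen_setOf_eq_half [Fintype E] {S : Set (Set E)} (hodd : ∀ s ∈ S, IsOddCycle bd s)
    (hindep : S.Pairwise (Indep bd)) :
    IsClopen {m : DimerLab bd | ∀ e ∈ ⋃₀ S, m.1 e = 1 / 2} := by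
  have hcoord (e : E) : Continuous fun m : DimerLab bd => m.1 e :=
    (continuous_apply e).comp continuous_subtype_val
  constructor
  · simp only [ofPred_forall]
    exact isClosed_biInter fun e _ => isClosed_eq (hcoord e) continuous_const
  · have hset : {m : DimerLab bd | ∀ e ∈ ⋃₀ S, m.1 e = 1 / 2} =
        {m : DimerLab bd | ∀ e ∈ ⋃₀ S, m.1 e ≠ 0} := by
      ext m
      refine ⟨fun hhalf e he => by rw [hhalf e he]; norm_num, m.2.eq_half_of_ne_zero hodd hindep⟩
    rw [hset]
    simp only [ofPred_forall]
    exact (toFinite _).isOpen_biInter fun e _ => isOpen_ne_fun (hcoord e) continuous_const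

end DimerLabelings

theorem subgraph_labelings_embed_general [Fintype E]
    (bd : E → Finset V)
    (S : Set (Set E))
    (hodd : ∀ s ∈ S, IsOddCycle bd s) (hindep : S.Pairwise (Indep bd)) :
    ∃ i : DimerLab (subBd bd S) → DimerLab bd,
      (∀ l : DimerLab (subBd bd S), (i l).1 = extLab bd S l.1) ∧
      Topology.IsEmbedding i ∧
      (∀ x ∈ Set.range i, pathComponent x ⊆ Set.range i) ∧
      (∀ A₀ : Set (SubEdge bd S), IsDimer (subBd bd S) A₀ →
        ∀ hδ : IsDimerLabeling (subBd bd S) (dimerDelta A₀),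
          i '' pathComponent ⟨dimerDelta A₀, hδ⟩ =
            pathComponent (i ⟨dimerDelta A₀, hδ⟩)) := by
  have hS : ∀ s ∈ S, IsCyclicSet bd s := fun s hs => (hodd s hs).1.1
  have hclopen : IsClopen (range (extDimerLab hS hindep)) :=
    range_extDimerLab hS hindep ▸ isClopen_setOf_eq_half hodd hindep
  exact ⟨extDimerLab hS hindep, fun _ => rfl, isEmbedding_extDimerLab hS hindep,
    fun _ hx => hclopen.pathComponent_subset hx, fun _ _ _ =>
      (isEmbedding_extDimerLab hS hindep).isInducing.image_pathComponent
        (hclopen.pathComponent_subset (mem_range_self _))⟩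

/-- for a finite set `S` of pairwise independent odd cycles of a
finite graph `Γ`, the extension map `i : L(Γ_S) → L(Γ)` is a topological embedding
whose image is a union of path components of `L(Γ)`; moreover if `Γ_S` admits a
dimer covering then `i(L₀(Γ_S))` is a single path component of `L(Γ)`. -/
theorem subgraph_labelings_embed [Fintype E] [Fintype V]
    (bd : E → Finset V) (hbd : ∀ e, (bd e).card = 2)
    (S : Set (Set E)) (hfin : S.Finite)
    (hodd : ∀ s ∈ S, IsOddCycle bd s) (hindep : S.Pairwise (Indep bd)) :
    ∃ i : DimerLab (subBd bd S) → DimerLab bd,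
      (∀ l : DimerLab (subBd bd S), (i l).1 = extLab bd S l.1) ∧
      Topology.IsEmbedding i ∧
      (∀ x ∈ Set.range i, pathComponent x ⊆ Set.range i) ∧
      (∀ A₀ : Set (SubEdge bd S), IsDimer (subBd bd S) A₀ →
        ∀ hδ : IsDimerLabeling (subBd bd S) (dimerDelta A₀),
          i '' pathComponent ⟨dimerDelta A₀, hδ⟩ =
            pathComponent (i ⟨dimerDelta A₀, hδ⟩)) :=
  subgraph_labelings_embed_general bd S hodd hindep
end
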